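/- For all constants C₁, C₂ > 0 there exists a constant c > 0 depending only on C₁ and C₂ such that the following holds. Let n2 ≥ 16, δ = c/(4 log n2), and let t ∈ ℕ with t ≤ ⌈log n2/(4 log log n2)⌉. Let v_t ∈ ℝ^{n2} be a unit vector, and let u_{t+1/2}, ũ_{t+1/2} ∈ ℝ^{n1} be nonzero vectors; set u_{t+1} := u_{t+1/2}/‖u_{t+1/2}‖ and ũ_{t+1} := ũ_{t+1/2}/‖ũ_{t+1/2}‖. Suppose: ‖u_{t+1/2}^∥ − ũ_{t+1/2}^∥‖ ≤ (c_{2t} + C₁·δ·(1+c_{2t}))·‖v_t^∥‖; ‖u_{t+1/2}^⊥ − ũ_{t+1/2}^⊥‖ ≤ C₁·δ·(1+c_{2t})·‖v_t^∥‖; (1 − C₂·δ·(1+c_{2t}))·‖u_{t+1/2}^∥‖ ≤ ‖v_t^∥‖ ≤ (1 + C₂·δ·(1+c_{2t}))·‖u_{t+1/2}^∥‖; and ‖u_{t+1}^∥‖ < c/log n2. Then max{ ‖u_{t+1}^∥ − ũ_{t+1}^∥‖, ‖u_{t+1}^⊥ − ũ_{t+1}^⊥‖ } ≤ c_{2t+1}·‖u_{t+1}^∥‖.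 -/

import Mathlib

/-!
Write `γ = 1 / log n2` and `s = c_{2t}`. For `t` in the allowed range,
`(1 + γ)^(2t) ≤ exp (2tγ) ≤ exp (3/2) < 5`, so `s ≤ 4` and each RIP error `C·δ·(1 + s)` is at most
`γ/160` once `c = 1/(200 (C₁ + C₂ + 1))`; absorbing them, the errors before normalization are
`(s + γ/25)·‖u^∥‖` and `(γ/100)·‖u^∥‖`.
Normalizing by `a = ‖u‖` and `b = ‖ũ‖` rescales these errors by `1/a` and adds
`|a - b|·‖ũ^∥‖/b` (resp. `|a - b|·‖ũ^⊥‖/b`), where `|a - b|` is at most the sum of the two errors.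
In the parallel component this extra term is `O(γ)·‖u^∥‖` because `‖u^∥‖ ≤ γ a/200` is tiny
compared with `a`, hence with `b`; in the orthogonal one `‖ũ^⊥‖ ≤ b`. Both totals stay below
`(s + γ)·‖u^∥‖ ≤ ((1 + γ) s + γ)·‖u^∥‖ = c_{2t+1}·‖u^∥‖`.
-/

open MeasureTheory ProbabilityTheory Matrix Finset
open scoped BigOperators ENNReal NNReal RealInnerProductSpace

noncomputable section

namespace ALSPaper

/-- View a plain vector as an element of Euclidean space. -/
def toE {n : ℕ} (x : Fin n → ℝ) : EuclideanSpace ℝ (Fin n) :=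
  (WithLp.equiv 2 (Fin n → ℝ)).symm x

/-- View an element of Euclidean space as a plain vector. -/
def ofE {n : ℕ} (x : EuclideanSpace ℝ (Fin n)) : Fin n → ℝ :=
  WithLp.equiv 2 (Fin n → ℝ) x

/-- The first standard basis vector. -/
def e1 (n : ℕ) : EuclideanSpace ℝ (Fin n) :=
  toE fun i => if (i : ℕ) = 0 then 1 else 0

/-- Frobenius inner product. -/
def frobInner {n1 n2 : ℕ} (A B : Matrix (Fin n1) (Fin n2) ℝ) : ℝ :=
  ∑ i, ∑ j, A i j * B i j

/-- Frobenius norm. -/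
def frobNorm {n1 n2 : ℕ} (A : Matrix (Fin n1) (Fin n2) ℝ) : ℝ :=
  Real.sqrt (frobInner A A)

/-- The measurement operator. -/
def calA {n1 n2 m : ℕ} (A : Fin m → Matrix (Fin n1) (Fin n2) ℝ)
    (X : Matrix (Fin n1) (Fin n2) ℝ) : EuclideanSpace ℝ (Fin m) :=
  toE fun i => (Real.sqrt m)⁻¹ * frobInner (A i) X

/-- The adjoint of the measurement operator. -/
def calAdj {n1 n2 m : ℕ} (A : Fin m → Matrix (Fin n1) (Fin n2) ℝ)
    (w : EuclideanSpace ℝ (Fin m)) : Matrix (Fin n1) (Fin n2) ℝ :=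
  ∑ i, ((Real.sqrt m)⁻¹ * ofE w i) • A i

/-- The restricted isometry property (RIP) with constant `δ` (for rank ≤ 4). -/
def HasRIP {n1 n2 m : ℕ} (A : Fin m → Matrix (Fin n1) (Fin n2) ℝ) (δ : ℝ) : Prop :=
  ∀ Z : Matrix (Fin n1) (Fin n2) ℝ, Z.rank ≤ 4 →
    (1 - δ) * frobNorm Z ^ 2 ≤ ‖calA A Z‖ ^ 2 ∧ ‖calA A Z‖ ^ 2 ≤ (1 + δ) * frobNorm Z ^ 2

/-- Component of `v` parallel to the first standard basis vector. -/
def par {n : ℕ} (v : EuclideanSpace ℝ (Fin n)) : EuclideanSpace ℝ (Fin n) :=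
  ⟪e1 n, v⟫ • e1 n

/-- Component of `v` orthogonal to the first standard basis vector. -/
def perp {n : ℕ} (v : EuclideanSpace ℝ (Fin n)) : EuclideanSpace ℝ (Fin n) :=
  v - par v

/-- The "diagonal block" part of a measurement matrix. -/
def Dmat {n1 n2 : ℕ} (A : Matrix (Fin n1) (Fin n2) ℝ) : Matrix (Fin n1) (Fin n2) ℝ :=
  vecMulVec (ofE (e1 n1)) (ofE (e1 n1)) * A * vecMulVec (ofE (e1 n2)) (ofE (e1 n2))
    + (1 - vecMulVec (ofE (e1 n1)) (ofE (e1 n1))) * A *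
        (1 - vecMulVec (ofE (e1 n2)) (ofE (e1 n2)))

/-- The "off-diagonal block" part of a measurement matrix. -/
def Omat {n1 n2 : ℕ} (A : Matrix (Fin n1) (Fin n2) ℝ) : Matrix (Fin n1) (Fin n2) ℝ :=
  vecMulVec (ofE (e1 n1)) (ofE (e1 n1)) * A * (1 - vecMulVec (ofE (e1 n2)) (ofE (e1 n2)))
    + (1 - vecMulVec (ofE (e1 n1)) (ofE (e1 n1))) * A * vecMulVec (ofE (e1 n2)) (ofE (e1 n2))

/-- The (1,1) entry of a matrix. -/
def ent11 {n1 n2 : ℕ} (A : Matrix (Fin n1) (Fin n2) ℝ) : ℝ :=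
  frobInner (vecMulVec (ofE (e1 n1)) (ofE (e1 n2))) A

/-- Spectral (operator) norm of a matrix. -/
def specNorm {n1 n2 : ℕ} (M : Matrix (Fin n1) (Fin n2) ℝ) : ℝ :=
  ‖LinearMap.toContinuousLinearMap (Matrix.toEuclideanLin M)‖

/-- The normal equation for the least-squares update. -/
def NormalEq {n1 n2 m : ℕ} (A : Fin m → Matrix (Fin n1) (Fin n2) ℝ)
    (u : EuclideanSpace ℝ (Fin n1)) (v : EuclideanSpace ℝ (Fin n2)) : Prop :=
  u = ⟪v, e1 n2⟫ • e1 n1 +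
    toE (((vecMulVec (ofE u) (ofE v) - vecMulVec (ofE (e1 n1)) (ofE (e1 n2))) -
      calAdj A (calA A (vecMulVec (ofE u) (ofE v) - vecMulVec (ofE (e1 n1)) (ofE (e1 n2)))))
        *ᵥ ofE v)

/-- sin of the angle between two vectors. -/
def sinAngle {n : ℕ} (a b : EuclideanSpace ℝ (Fin n)) : ℝ :=
  Real.sqrt (1 - ⟪a, b⟫ ^ 2 / (‖a‖ ^ 2 * ‖b‖ ^ 2))

/-- `c_t` sequence. -/
def cseq (n2 t : ℕ) : ℝ := (1 + 1 / Real.log n2) ^ t - 1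

/-- ALS iterates. -/
def IsALS {n1 n2 m : ℕ} (A : Fin m → Matrix (Fin n1) (Fin n2) ℝ)
    (y : EuclideanSpace ℝ (Fin m)) (v0 : EuclideanSpace ℝ (Fin n2))
    (u : ℕ → EuclideanSpace ℝ (Fin n1)) (v : ℕ → EuclideanSpace ℝ (Fin n2))
    (uh : ℕ → EuclideanSpace ℝ (Fin n1)) (vh : ℕ → EuclideanSpace ℝ (Fin n2)) : Prop :=
  v 0 = v0 ∧
  ∀ t : ℕ,
    (∀ u' : EuclideanSpace ℝ (Fin n1),
      ‖y - calA A (vecMulVec (ofE (uh t)) (ofE (v t)))‖ ≤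
        ‖y - calA A (vecMulVec (ofE u') (ofE (v t)))‖) ∧
    u (t + 1) = ‖uh t‖⁻¹ • uh t ∧
    (∀ v' : EuclideanSpace ℝ (Fin n2),
      ‖y - calA A (vecMulVec (ofE (u (t + 1))) (ofE (vh t)))‖ ≤
        ‖y - calA A (vecMulVec (ofE (u (t + 1))) (ofE v'))‖) ∧
    v (t + 1) = ‖vh t‖⁻¹ • vh t

section Projections

variable {n : ℕ}

lemma e1_eq_single [NeZero n] : e1 n = EuclideanSpace.single 0 1 := by
  ext i
  rw [PiLp.single_apply]
  simp only [e1, toE, WithLp.equiv_symm_apply, PiLp.toLp_apply, ← Fin.val_eq_zero_iff]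

lemma inner_e1_self [NeZero n] : ⟪e1 n, e1 n⟫ = 1 := by
  rw [e1_eq_single, EuclideanSpace.inner_single_left]
  simp

lemma par_smul (r : ℝ) (v : EuclideanSpace ℝ (Fin n)) : par (r • v) = r • par v := by
  rw [par, par, real_inner_smul_right, smul_smul]

lemma perp_smul (r : ℝ) (v : EuclideanSpace ℝ (Fin n)) : perp (r • v) = r • perp v := by
  rw [perp, perp, par_smul, smul_sub]

lemma par_add_perp (v : EuclideanSpace ℝ (Fin n)) : par v + perp v = v :=
  add_sub_cancel _ _

lemma inner_par_perp [NeZero n] (v : EuclideanSpace ℝ (Fin n)) : ⟪par v, perp v⟫ = 0 := by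
  rw [perp, par, real_inner_smul_left, inner_sub_right, real_inner_smul_right, inner_e1_self]
  ring

lemma norm_perp_le [NeZero n] (v : EuclideanSpace ℝ (Fin n)) : ‖perp v‖ ≤ ‖v‖ := by
  have h := norm_add_sq_eq_norm_sq_add_norm_sq_real (inner_par_perp v)
  rw [par_add_perp] at h
  nlinarith [norm_nonneg (perp v), norm_nonneg v]

lemma abs_norm_sub_norm_le_par_add_perp (u v : EuclideanSpace ℝ (Fin n)) :
    |‖u‖ - ‖v‖| ≤ ‖par u - par v‖ + ‖perp u - perp v‖ :=
  calc |‖u‖ - ‖v‖| ≤ ‖u - v‖ := abs_norm_sub_norm_le u v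
    _ = ‖(par u - par v) + (perp u - perp v)‖ := by
      rw [perp, perp]
      abel_nf
    _ ≤ _ := norm_add_le _ _

end Projections

lemma norm_inv_smul_sub_inv_smul_le {F : Type*} [NormedAddCommGroup F] [NormedSpace ℝ F]
    {a b : ℝ} (ha : 0 < a) (hb : 0 < b) (x y : F) :
    ‖a⁻¹ • x - b⁻¹ • y‖ ≤ a⁻¹ * (‖x - y‖ + |a - b| * ‖y‖ / b) := by
  have hsplit : a⁻¹ • x - b⁻¹ • y = a⁻¹ • (x - y) + (a⁻¹ - b⁻¹) • y := by
    rw [smul_sub, sub_smul]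
    abel
  have hcoef : |a⁻¹ - b⁻¹| = a⁻¹ * (|a - b| / b) := by
    rw [inv_sub_inv ha.ne' hb.ne', abs_div, abs_sub_comm, abs_of_pos (mul_pos ha hb)]
    field_simp
  calc ‖a⁻¹ • x - b⁻¹ • y‖ ≤ ‖a⁻¹ • (x - y)‖ + ‖(a⁻¹ - b⁻¹) • y‖ := hsplit ▸ norm_add_le _ _
    _ = a⁻¹ * (‖x - y‖ + |a - b| * ‖y‖ / b) := by
      rw [norm_smul, norm_smul, Real.norm_eq_abs, Real.norm_eq_abs, abs_inv, abs_of_pos ha, hcoef]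
      ring

lemma norm_par_le_of_norm_par_normalize_lt {n : ℕ} {u : EuclideanSpace ℝ (Fin n)} {r : ℝ}
    (hu : u ≠ 0) (h : ‖par (‖u‖⁻¹ • u)‖ < r) : ‖par u‖ ≤ r * ‖u‖ := by
  rw [par_smul, norm_smul, norm_inv, norm_norm, inv_mul_lt_iff₀ (norm_pos_iff.2 hu)] at h
  linarith

lemma rip_error_le {C K s γ : ℝ} (hK : 0 < K) (hCK : C ≤ K) (hs0 : 0 ≤ s) (hs4 : s ≤ 4)
    (hγ0 : 0 ≤ γ) : C * (1 / (200 * K) * γ / 4) * (1 + s) ≤ γ / 160 :=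
  calc C * (1 / (200 * K) * γ / 4) * (1 + s) ≤ K * (1 / (200 * K) * γ / 4) * (1 + s) := by
        gcongr
    _ = γ * (1 + s) / 800 := by field_simp; ring
    _ ≤ γ / 160 := by nlinarith

section ErrorBounds

variable {s γ ε₁ ε₂ np P a b D₁ D₂ q : ℝ}

lemma par_error_absorb_le (hs0 : 0 ≤ s) (hs4 : s ≤ 4) (hγ0 : 0 ≤ γ)
    (hγ1 : γ ≤ 1) (hε₁0 : 0 ≤ ε₁) (hε₁ : ε₁ ≤ γ / 160) (hε₂0 : 0 ≤ ε₂) (hε₂ : ε₂ ≤ γ / 160)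
    (hnp : 0 ≤ np) (hD : D₁ ≤ (s + ε₁) * P) (hP : P ≤ (1 + ε₂) * np) :
    D₁ ≤ (s + γ / 25) * np := by
  have h : D₁ ≤ (s + γ / 160) * (1 + γ / 160) * np :=
    calc D₁ ≤ (s + ε₁) * ((1 + ε₂) * np) := hD.trans (by gcongr)
      _ ≤ (s + γ / 160) * (1 + γ / 160) * np := by rw [← mul_assoc]; gcongr
  have hγnp : 0 ≤ γ * np := mul_nonneg hγ0 hnp
  nlinarith [mul_le_mul_of_nonneg_right hs4 hγnp, mul_le_mul_of_nonneg_right hγ1 hγnp]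

lemma perp_error_absorb_le (hγ0 : 0 ≤ γ) (hγ1 : γ ≤ 1) (hε₁0 : 0 ≤ ε₁)
    (hε₁ : ε₁ ≤ γ / 160) (hε₂0 : 0 ≤ ε₂) (hε₂ : ε₂ ≤ γ / 160) (hnp : 0 ≤ np)
    (hD : D₂ ≤ ε₁ * P) (hP : P ≤ (1 + ε₂) * np) :
    D₂ ≤ γ / 100 * np := by
  have h : D₂ ≤ γ / 160 * (1 + γ / 160) * np :=
    calc D₂ ≤ ε₁ * ((1 + ε₂) * np) := hD.trans (by gcongr)
      _ ≤ γ / 160 * (1 + γ / 160) * np := by rw [← mul_assoc]; gcongr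
  have hγnp : 0 ≤ γ * np := mul_nonneg hγ0 hnp
  nlinarith [mul_le_mul_of_nonneg_right hγ1 hγnp]

lemma par_error_normalize_le (hs4 : s ≤ 4) (hγ0 : 0 ≤ γ) (hγ1 : γ ≤ 1) (hnp : 0 ≤ np) (hb : 0 < b)
    (hD₁ : D₁ ≤ (s + γ / 25) * np) (hD₂ : D₂ ≤ γ / 100 * np) (hab : |a - b| ≤ D₁ + D₂)
    (hsmall : 200 * np ≤ γ * a) (hq0 : 0 ≤ q) (hq : q ≤ np + D₁) :
    D₁ + |a - b| * q / b ≤ (s + γ) * np := by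
  have hab5 : |a - b| ≤ 5 * np := by nlinarith
  have hq6 : q ≤ 6 * np := by nlinarith
  -- `a ≤ b + 5 np`, so the smallness of `np` relative to `a` transfers to `b`.
  have hnpb : 195 * np ≤ γ * b := by nlinarith [le_abs_self (a - b)]
  have hcross : |a - b| * q / b ≤ 4 / 25 * γ * np := by
    rw [div_le_iff₀ hb]
    calc |a - b| * q ≤ 5 * np * (6 * np) := mul_le_mul hab5 hq6 hq0 (by positivity)
      _ ≤ 4 / 25 * γ * np * b := by nlinarith
  nlinarith [mul_nonneg hγ0 hnp]

lemma perp_error_normalize_le (hγ0 : 0 ≤ γ) (hnp : 0 ≤ np) (hb : 0 < b)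
    (hD₁ : D₁ ≤ (s + γ / 25) * np) (hD₂ : D₂ ≤ γ / 100 * np) (hab : |a - b| ≤ D₁ + D₂)
    (hq : q ≤ b) :
    D₂ + |a - b| * q / b ≤ (s + γ) * np := by
  have hcross : |a - b| * q / b ≤ |a - b| := by
    rw [div_le_iff₀ hb]
    exact mul_le_mul_of_nonneg_left hq (abs_nonneg _)
  nlinarith [mul_nonneg hγ0 hnp]

end ErrorBounds

theorem max_dist_normalize_le {n : ℕ} [NeZero n] {s γ : ℝ} (hs4 : s ≤ 4) (hγ0 : 0 ≤ γ)
    (hγ1 : γ ≤ 1) {u u' : EuclideanSpace ℝ (Fin n)} (hu : u ≠ 0) (hu' : u' ≠ 0)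
    (hpar : ‖par u - par u'‖ ≤ (s + γ / 25) * ‖par u‖)
    (hperp : ‖perp u - perp u'‖ ≤ γ / 100 * ‖par u‖)
    (hsmall : 200 * ‖par u‖ ≤ γ * ‖u‖) :
    max ‖par (‖u‖⁻¹ • u) - par (‖u'‖⁻¹ • u')‖ ‖perp (‖u‖⁻¹ • u) - perp (‖u'‖⁻¹ • u')‖
      ≤ (s + γ) * ‖par (‖u‖⁻¹ • u)‖ := by
  have ha : 0 < ‖u‖ := norm_pos_iff.2 hu
  have hb : 0 < ‖u'‖ := norm_pos_iff.2 hu'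
  have hab := abs_norm_sub_norm_le_par_add_perp u u'
  have hscale : (s + γ) * ‖par (‖u‖⁻¹ • u)‖ = ‖u‖⁻¹ * ((s + γ) * ‖par u‖) := by
    rw [par_smul, norm_smul, norm_inv, norm_norm]
    ring
  rw [hscale, par_smul, par_smul, perp_smul, perp_smul]
  refine max_le ?_ ?_
  · refine (norm_inv_smul_sub_inv_smul_le ha hb _ _).trans
      (mul_le_mul_of_nonneg_left ?_ (inv_nonneg.2 ha.le))
    exact par_error_normalize_le hs4 hγ0 hγ1 (norm_nonneg _) hb hpar hperp hab hsmall
      (norm_nonneg _) (norm_le_norm_add_norm_sub _ _)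
  · refine (norm_inv_smul_sub_inv_smul_le ha hb _ _).trans
      (mul_le_mul_of_nonneg_left ?_ (inv_nonneg.2 ha.le))
    exact perp_error_normalize_le hγ0 (norm_nonneg _) hb hpar hperp hab (norm_perp_le u')

lemma cseq_succ (n2 k : ℕ) :
    cseq n2 (k + 1) = (1 + 1 / Real.log n2) * cseq n2 k + 1 / Real.log n2 := by
  rw [cseq, cseq, pow_succ]
  ring

lemma cseq_nonneg (n2 k : ℕ) : 0 ≤ cseq n2 k := by
  rw [cseq, sub_nonneg]
  exact one_le_pow₀ (le_add_of_nonneg_right (div_nonneg zero_le_one (Real.log_natCast_nonneg n2)))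

lemma exp_one_lt_log_of_sixteen_le {n : ℕ} (hn : 16 ≤ n) : Real.exp 1 < Real.log n := by
  have h16 : Real.log 16 ≤ Real.log n := Real.log_le_log (by norm_num) (by exact_mod_cast hn)
  have h2 : Real.log 16 = 4 * Real.log 2 := by
    rw [show (16 : ℝ) = 2 ^ 4 by norm_num, Real.log_pow]
    norm_num
  linarith [Real.exp_one_lt_d9, Real.log_two_gt_d9]

lemma two_mul_div_log_le {n t : ℕ} (hn : 16 ≤ n)
    (ht : t ≤ ⌈Real.log n / (4 * Real.log (Real.log n))⌉₊) :
    2 * t / Real.log n ≤ 3 / 2 := by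
  have hL := exp_one_lt_log_of_sixteen_le hn
  have hL2 : 2 ≤ Real.log n := by linarith [Real.exp_one_gt_d9]
  have hlogL : 1 ≤ Real.log (Real.log n) := by
    rw [Real.le_log_iff_exp_le (by linarith)]
    exact hL.le
  have hceil : (t : ℝ) < Real.log n / (4 * Real.log (Real.log n)) + 1 :=
    (Nat.cast_le.2 ht).trans_lt (Nat.ceil_lt_add_one (by positivity))
  have hx : Real.log n / (4 * Real.log (Real.log n)) ≤ Real.log n / 4 :=
    div_le_div_of_nonneg_left (by linarith) (by norm_num) (by linarith)
  rw [div_le_iff₀ (by linarith)]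
  linarith

lemma one_add_pow_le_exp_mul {x : ℝ} (hx : -1 ≤ x) (k : ℕ) : (1 + x) ^ k ≤ Real.exp (k * x) := by
  rw [Real.exp_nat_mul]
  exact pow_le_pow_left₀ (by linarith) (by linarith [Real.add_one_le_exp x]) k

lemma exp_three_halves_lt_five : Real.exp (3 / 2) < 5 := by
  have hsq : Real.exp (3 / 2) ^ 2 = Real.exp 1 ^ 3 := by
    rw [← Real.exp_nat_mul, ← Real.exp_nat_mul]
    norm_num
  have hcube : Real.exp 1 ^ 3 < 2.7182818286 ^ 3 :=
    pow_lt_pow_left₀ Real.exp_one_lt_d9 (Real.exp_pos 1).le (by norm_num)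
  nlinarith [Real.exp_pos (3 / 2)]

lemma cseq_two_mul_le_four {n2 t : ℕ} (hn2 : 16 ≤ n2)
    (ht : t ≤ ⌈Real.log n2 / (4 * Real.log (Real.log n2))⌉₊) :
    cseq n2 (2 * t) ≤ 4 := by
  have hγ : 0 ≤ 1 / Real.log n2 := div_nonneg zero_le_one (Real.log_natCast_nonneg n2)
  have hpow : (1 + 1 / Real.log n2) ^ (2 * t) < 5 :=
    calc (1 + 1 / Real.log n2) ^ (2 * t) ≤ Real.exp ((2 * t : ℕ) * (1 / Real.log n2)) :=
          one_add_pow_le_exp_mul (by linarith) _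
      _ ≤ Real.exp (3 / 2) := by
          rw [Real.exp_le_exp, mul_one_div]
          exact_mod_cast two_mul_div_log_le hn2 ht
      _ < 5 := exp_three_halves_lt_five
  rw [cseq]
  linarith

/-- Lemma `closeness4`: the original and auxiliary sequences stay close after
the normalization step. -/
theorem statement14 (C₁ C₂ : ℝ) (hC₁ : 0 < C₁) (hC₂ : 0 < C₂) :
    ∃ c : ℝ, 0 < c ∧
      ∀ (n1 n2 : ℕ), 16 ≤ n2 →
      ∀ δ : ℝ, δ = c / (4 * Real.log n2) →
      ∀ t : ℕ, t ≤ ⌈Real.log n2 / (4 * Real.log (Real.log n2))⌉₊ →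
      ∀ (vt : EuclideanSpace ℝ (Fin n2)), ‖vt‖ = 1 →
      ∀ (uh uth : EuclideanSpace ℝ (Fin n1)), uh ≠ 0 → uth ≠ 0 →
      ‖par uh - par uth‖ ≤ (cseq n2 (2 * t) + C₁ * δ * (1 + cseq n2 (2 * t))) * ‖par vt‖ →
      ‖perp uh - perp uth‖ ≤ C₁ * δ * (1 + cseq n2 (2 * t)) * ‖par vt‖ →
      (1 - C₂ * δ * (1 + cseq n2 (2 * t))) * ‖par uh‖ ≤ ‖par vt‖ →
      ‖par vt‖ ≤ (1 + C₂ * δ * (1 + cseq n2 (2 * t))) * ‖par uh‖ →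
      ‖par (‖uh‖⁻¹ • uh)‖ < c / Real.log n2 →
      max ‖par (‖uh‖⁻¹ • uh) - par (‖uth‖⁻¹ • uth)‖
          ‖perp (‖uh‖⁻¹ • uh) - perp (‖uth‖⁻¹ • uth)‖
        ≤ cseq n2 (2 * t + 1) * ‖par (‖uh‖⁻¹ • uh)‖ := by
  set c := 1 / (200 * (C₁ + C₂ + 1)) with hc
  refine ⟨c, by positivity, ?_⟩
  intro n1 n2 hn2 δ hδ t ht vt _ uh uth huh huth hpar hperp _ hvt hsmall
  have : NeZero n1 := ⟨by rintro rfl; exact huh (Subsingleton.elim _ _)⟩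
  set γ := 1 / Real.log n2 with hγ
  set s := cseq n2 (2 * t)
  have hL : 1 < Real.log n2 := by linarith [exp_one_lt_log_of_sixteen_le hn2, Real.exp_one_gt_d9]
  have hγ0 : 0 ≤ γ := by positivity
  have hγ1 : γ ≤ 1 := (div_le_one (by linarith)).2 hL.le
  have hs4 : s ≤ 4 := cseq_two_mul_le_four hn2 ht
  have hs0 : 0 ≤ s := cseq_nonneg n2 (2 * t)
  have hδγ : δ = c * γ / 4 := by rw [hδ, hγ]; ring
  have hδ0 : 0 ≤ δ := by rw [hδγ]; positivity
  have hε₁ : C₁ * δ * (1 + s) ≤ γ / 160 :=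
    hδγ ▸ rip_error_le (by positivity) (by linarith) hs0 hs4 hγ0
  have hε₂ : C₂ * δ * (1 + s) ≤ γ / 160 :=
    hδγ ▸ rip_error_le (by positivity) (by linarith) hs0 hs4 hγ0
  have hnp : 0 ≤ ‖par uh‖ := norm_nonneg _
  have hpar' : ‖par uh - par uth‖ ≤ (s + γ / 25) * ‖par uh‖ :=
    par_error_absorb_le hs0 hs4 hγ0 hγ1 (by positivity) hε₁ (by positivity) hε₂ hnp hpar hvt
  have hperp' : ‖perp uh - perp uth‖ ≤ γ / 100 * ‖par uh‖ :=
    perp_error_absorb_le hγ0 hγ1 (by positivity) hε₁ (by positivity) hε₂ hnp hperp hvt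
  have hsmall' : 200 * ‖par uh‖ ≤ γ * ‖uh‖ := by
    have h : ‖par uh‖ ≤ c * γ * ‖uh‖ :=
      norm_par_le_of_norm_par_normalize_lt huh (hsmall.trans_eq (by rw [hγ]; ring))
    have hc200 : 200 * c ≤ 1 := by rw [hc, mul_one_div, div_le_one (by positivity)]; linarith
    nlinarith [mul_nonneg (sub_nonneg.2 hc200) (mul_nonneg hγ0 (norm_nonneg uh))]
  calc _ ≤ (s + γ) * ‖par (‖uh‖⁻¹ • uh)‖ :=
        max_dist_normalize_le hs4 hγ0 hγ1 huh huth hpar' hperp' hsmall'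
    _ ≤ cseq n2 (2 * t + 1) * ‖par (‖uh‖⁻¹ • uh)‖ := by
        rw [cseq_succ]
        gcongr
        nlinarith [mul_nonneg hγ0 hs0]

end ALSPaper
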